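/- arXiv:1207.5523 — 5 statements merged into one kernel-verified Lean document; each statement's English description precedes it below -/
import Mathlib

section
/- Let n ≥ 1 and let ρ be a 2⊗n density matrix (a positive semidefinite complex matrix indexed by Fin 2 × Fin n with trace 1). Then the partial transpose ρ^{T_A} (which is Hermitian) has at most n − 1 negative eigenvalues, counted with multiplicity. -/
/-!
The quadratic form of `ρ^{T_A}` is nonnegative on product vectors, because
`⟨a ⊗ b, ρ^{T_A} (a ⊗ b)⟩ = ⟨ā ⊗ b, ρ (ā ⊗ b)⟩`, whereas it is negative definite on the span `W`
of the eigenvectors with negative eigenvalues. So it suffices that every subspace `W` of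
`K² ⊗ Kⁿ` (`K` algebraically closed) with `dim W ≥ n` contains a nonzero product vector. Either
the projection of `W` onto the first row has a kernel, which consists of vectors `e₂ ⊗ x`, or it
is an isomorphism `W ≃ Kⁿ`; then an eigenvector `x` of (second row) ∘ (first row)⁻¹ with
eigenvalue `μ` yields `(1, μ) ⊗ x ∈ W`.
-/

open Matrix
open scoped ComplexOrder

noncomputable section

/-- Partial transpose with respect to the first (qubit) factor. -/
def ptA {n : ℕ} (ρ : Matrix (Fin 2 × Fin n) (Fin 2 × Fin n) ℂ) :
    Matrix (Fin 2 × Fin n) (Fin 2 × Fin n) ℂ :=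
  fun p q => ρ (q.1, p.2) (p.1, q.2)

section ProductVector

variable {R α β : Type*}

def productVector [Mul R] (a : α → R) (b : β → R) : α × β → R := fun p => a p.1 * b p.2

theorem eq_productVector_of_rows [Mul R] (v : Fin 2 × β → R) (a : Fin 2 → R) (b : β → R)
    (h₀ : ∀ j, v (0, j) = a 0 * b j) (h₁ : ∀ j, v (1, j) = a 1 * b j) :
    v = productVector a b := by
  ext ⟨i, j⟩
  fin_cases i
  exacts [h₀ j, h₁ j]

theorem productVector_ne_zero [MulZeroClass R] [NoZeroDivisors R] {a : α → R} {b : β → R}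
    (ha : a ≠ 0) (hb : b ≠ 0) : productVector a b ≠ 0 := by
  obtain ⟨i, hi⟩ := Function.ne_iff.mp ha
  obtain ⟨j, hj⟩ := Function.ne_iff.mp hb
  exact Function.ne_iff.mpr ⟨(i, j), mul_ne_zero hi hj⟩

theorem exists_productVector_mem_of_card_sub_one_lt_finrank {K : Type*} [Field K]
    [IsAlgClosed K] [Fintype β] (W : Submodule K (Fin 2 × β → K))
    (hW : Fintype.card β - 1 < Module.finrank K W) :
    ∃ (a : Fin 2 → K) (b : β → K), productVector a b ≠ 0 ∧ productVector a b ∈ W := by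
  let row (i : Fin 2) : W →ₗ[K] β → K := LinearMap.funLeft K K (fun j => (i, j)) ∘ₗ W.subtype
  by_cases hinj : Function.Injective (row 0)
  · have hle := LinearMap.finrank_le_finrank_of_injective hinj
    rw [Module.finrank_fintype_fun_eq_card] at hle
    have hdim : Module.finrank K W = Module.finrank K (β → K) := by
      rw [Module.finrank_fintype_fun_eq_card]; omega
    let e := (row 0).linearEquivOfInjective hinj hdim
    have : Nonempty β := Fintype.card_pos_iff.mp (by omega)
    obtain ⟨μ, hμ⟩ := Module.End.exists_eigenvalue (row 1 ∘ₗ e.symm.toLinearMap)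
    obtain ⟨x, hx⟩ := hμ.exists_hasEigenvector
    have hrow₀ : row 0 (e.symm x) = x := e.apply_symm_apply x
    have hrow₁ : row 1 (e.symm x) = μ • x := hx.apply_eq_smul
    refine ⟨![1, μ], x, productVector_ne_zero (by simp) hx.2, ?_⟩
    rw [← eq_productVector_of_rows (e.symm x : Fin 2 × β → K) ![1, μ] x
      (fun j => by simpa [row] using congrFun hrow₀ j)
      (fun j => by simpa [row] using congrFun hrow₁ j)]
    exact (e.symm x).2
  · obtain ⟨w, hw₀, hw_ne⟩ := Submodule.exists_mem_ne_zero_of_ne_bot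
      (mt LinearMap.ker_eq_bot.mp hinj)
    have hw : (w : Fin 2 × β → K) = productVector ![0, 1] (row 1 w) :=
      eq_productVector_of_rows _ _ _ (fun j => by simpa [row] using congrFun hw₀ j)
        (fun j => by simp [row])
    exact ⟨![0, 1], row 1 w, fun h => hw_ne (Subtype.ext (hw.trans h)), hw ▸ w.2⟩

end ProductVector

namespace Matrix.IsHermitian

variable {𝕜 ι : Type*} [RCLike 𝕜] [Fintype ι] [DecidableEq ι] {A : Matrix ι ι 𝕜}

theorem dotProduct_mulVec_eigenvectorUnitary_mulVec (hA : A.IsHermitian) (d : ι → 𝕜) :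
    star (hA.eigenvectorUnitary *ᵥ d) ⬝ᵥ A *ᵥ (hA.eigenvectorUnitary *ᵥ d) =
      ∑ i, (hA.eigenvalues i : 𝕜) * (star (d i) * d i) := by
  have hD := hA.conjStarAlgAut_star_eigenvectorUnitary
  rw [Unitary.conjStarAlgAut_star_apply] at hD
  rw [mulVec_mulVec, star_mulVec, dotProduct_mulVec, vecMul_vecMul, ← dotProduct_mulVec,
    ← Matrix.star_eq_conjTranspose, ← mul_assoc, hD]
  simp only [dotProduct, mulVec_diagonal, Pi.star_apply, Function.comp_apply]
  exact Finset.sum_congr rfl fun i _ => by ring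

theorem re_dotProduct_mulVec_eigenvectorUnitary_mulVec_neg (hA : A.IsHermitian) {d : ι → 𝕜}
    (hd : d ≠ 0) (hneg : ∀ i, d i ≠ 0 → hA.eigenvalues i < 0) :
    RCLike.re (star (hA.eigenvectorUnitary *ᵥ d) ⬝ᵥ A *ᵥ (hA.eigenvectorUnitary *ᵥ d)) < 0 := by
  obtain ⟨j, hj⟩ : ∃ j, d j ≠ 0 := Function.ne_iff.mp hd
  rw [dotProduct_mulVec_eigenvectorUnitary_mulVec, map_sum]
  simp only [RCLike.star_def, RCLike.conj_mul, ← RCLike.ofReal_pow, ← RCLike.ofReal_mul,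
    RCLike.ofReal_re]
  refine Finset.sum_neg' (fun i _ => ?_) ⟨j, Finset.mem_univ j, ?_⟩
  · by_cases hi : d i = 0
    · simp [hi]
    · exact mul_nonpos_of_nonpos_of_nonneg (hneg i hi).le (sq_nonneg _)
  · exact mul_neg_of_neg_of_pos (hneg j hj) (by positivity)

theorem exists_submodule_finrank_eq_card_eigenvalues_neg (hA : A.IsHermitian) :
    ∃ W : Submodule 𝕜 (ι → 𝕜),
      Module.finrank 𝕜 W = (Finset.univ.filter fun i => hA.eigenvalues i < 0).card ∧
      ∀ w ∈ W, w ≠ 0 → RCLike.re (star w ⬝ᵥ A *ᵥ w) < 0 := by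
  let L : ({i // hA.eigenvalues i < 0} → 𝕜) →ₗ[𝕜] ι → 𝕜 :=
    (hA.eigenvectorUnitary : Matrix ι ι 𝕜).mulVecLin ∘ₗ
      Function.ExtendByZero.linearMap 𝕜 Subtype.val
  have hL : Function.Injective L :=
    (mulVec_injective_of_isUnit Unitary.isUnit_coe).comp
      (Function.extend_injective Subtype.val_injective (0 : ι → 𝕜))
  refine ⟨LinearMap.range L, ?_, ?_⟩
  · rw [LinearMap.finrank_range_of_inj hL, Module.finrank_fintype_fun_eq_card,
      Fintype.card_subtype]
  · rintro _ ⟨c, rfl⟩ hc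
    refine hA.re_dotProduct_mulVec_eigenvectorUnitary_mulVec_neg (fun h => hc ?_) fun i hi => ?_
    · simp [L, h]
    · by_contra hi'
      exact hi (Function.extend_apply' _ _ _ fun ⟨j, hj⟩ => hi' (hj ▸ j.2))

end Matrix.IsHermitian

theorem dotProduct_ptA_mulVec_productVector {n : ℕ}
    (ρ : Matrix (Fin 2 × Fin n) (Fin 2 × Fin n) ℂ) (a : Fin 2 → ℂ) (b : Fin n → ℂ) :
    star (productVector a b) ⬝ᵥ ptA ρ *ᵥ productVector a b =
      star (productVector (star a) b) ⬝ᵥ ρ *ᵥ productVector (star a) b := by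
  simp only [dotProduct, mulVec, Finset.mul_sum, Fintype.sum_prod_type, ptA, productVector,
    Pi.star_apply, star_mul', star_star, Fin.sum_univ_two, ← Finset.sum_add_distrib]
  exact Finset.sum_congr rfl fun _ _ => Finset.sum_congr rfl fun _ _ => by ring

theorem dotProduct_ptA_mulVec_productVector_nonneg {n : ℕ}
    {ρ : Matrix (Fin 2 × Fin n) (Fin 2 × Fin n) ℂ} (hρ : ρ.PosSemidef) (a : Fin 2 → ℂ)
    (b : Fin n → ℂ) : 0 ≤ star (productVector a b) ⬝ᵥ ptA ρ *ᵥ productVector a b :=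
  dotProduct_ptA_mulVec_productVector ρ a b ▸ hρ.dotProduct_mulVec_nonneg _

theorem pt_neg_eigenvalues_le_general {n : ℕ}
    (ρ : Matrix (Fin 2 × Fin n) (Fin 2 × Fin n) ℂ)
    (hρ : ρ.PosSemidef)
    (hH : (ptA ρ).IsHermitian) :
    (Finset.univ.filter fun i => hH.eigenvalues i < 0).card ≤ n - 1 := by
  obtain ⟨W, hW_dim, hW_neg⟩ := hH.exists_submodule_finrank_eq_card_eigenvalues_neg
  by_contra! h
  obtain ⟨a, b, hab, habW⟩ := exists_productVector_mem_of_card_sub_one_lt_finrank W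
    (by rwa [Fintype.card_fin, hW_dim])
  exact (hW_neg _ habW hab).not_ge (RCLike.nonneg_iff.mp
    (dotProduct_ptA_mulVec_productVector_nonneg hρ a b)).1

/-- Partial transposition of any `2 ⊗ n` density matrix has at most `n - 1`
negative eigenvalues (counted with multiplicity). -/
theorem pt_neg_eigenvalues_le {n : ℕ} (hn : 1 ≤ n)
    (ρ : Matrix (Fin 2 × Fin n) (Fin 2 × Fin n) ℂ)
    (hρ : ρ.PosSemidef) (htr : ρ.trace = 1)
    (hH : (ptA ρ).IsHermitian) :
    (Finset.univ.filter fun i => hH.eigenvalues i < 0).card ≤ n - 1 :=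
  pt_neg_eigenvalues_le_general ρ hρ hH
end
end

section
/- Let n ≥ 1. Every complex linear subspace of ℂ^{2n} ≅ ℂ² ⊗ ℂⁿ (vectors indexed by Fin 2 × Fin n) of dimension at least n contains a nonzero product vector, i.e., a vector of the form e ⊗ f with e ∈ ℂ², f ∈ ℂⁿ, e ⊗ f ≠ 0, where (e ⊗ f)(i,k) = e(i)·f(k). -/
open Matrix

noncomputable section

/-- The product vector `e ⊗ f`. -/
def prodVec {n : ℕ} (e : Fin 2 → ℂ) (f : Fin n → ℂ) : Fin 2 × Fin n → ℂ :=
  fun p => e p.1 * f p.2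

/-- Every subspace of `ℂ² ⊗ ℂⁿ` of dimension at least `n` contains a nonzero
product vector. -/
theorem subspace_contains_prodVec {n : ℕ} (hn : 1 ≤ n)
    (V : Submodule ℂ (Fin 2 × Fin n → ℂ)) (hV : n ≤ Module.finrank ℂ V) :
    ∃ (e : Fin 2 → ℂ) (f : Fin n → ℂ),
      prodVec e f ∈ V ∧ prodVec e f ≠ 0 := by
  classical
  -- projections onto the two rows
  let π : Fin 2 → (V →ₗ[ℂ] (Fin n → ℂ)) := fun i =>
    (LinearMap.funLeft ℂ ℂ (fun k : Fin n => (i, k))).comp V.subtype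
  have hπ : ∀ (i : Fin 2) (v : V) (k : Fin n), π i v k = (v : Fin 2 × Fin n → ℂ) (i, k) := by
    intro i v k; rfl
  by_cases hinj : Function.Injective (π 1)
  · -- π 1 is injective, hence bijective by dimension count
    have hle : Module.finrank ℂ V ≤ n := by
      have := LinearMap.finrank_le_finrank_of_injective hinj
      simpa [Module.finrank_fintype_fun_eq_card] using this
    have heq : Module.finrank ℂ V = Module.finrank ℂ (Fin n → ℂ) := by
      simp [Module.finrank_fintype_fun_eq_card]
      omega
    have hsurj : Function.Surjective (π 1) :=
      (LinearMap.injective_iff_surjective_of_finrank_eq_finrank heq).mp hinj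
    let e2 : V ≃ₗ[ℂ] (Fin n → ℂ) := LinearEquiv.ofBijective (π 1) ⟨hinj, hsurj⟩
    let T : Module.End ℂ (Fin n → ℂ) := (π 0).comp (e2.symm : (Fin n → ℂ) →ₗ[ℂ] V)
    haveI : Nontrivial (Fin n → ℂ) := by
      have : Nonempty (Fin n) := ⟨⟨0, hn⟩⟩
      infer_instance
    obtain ⟨μ, hμ⟩ := Module.End.exists_eigenvalue T
    obtain ⟨y, hy⟩ := hμ.exists_hasEigenvector
    have hTy : T y = μ • y := hy.apply_eq_smul
    set v : V := e2.symm y with hv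
    have h1 : ∀ k, (v : Fin 2 × Fin n → ℂ) (1, k) = y k := by
      intro k
      have : π 1 v = y := e2.apply_symm_apply y
      rw [← hπ 1 v k, this]
    have h0 : ∀ k, (v : Fin 2 × Fin n → ℂ) (0, k) = μ * y k := by
      intro k
      have : π 0 v = μ • y := hTy
      rw [← hπ 0 v k, this]; simp
    refine ⟨![μ, 1], y, ?_, ?_⟩
    · have : prodVec ![μ, 1] y = (v : Fin 2 × Fin n → ℂ) := by
        funext p
        obtain ⟨i, k⟩ := p
        fin_cases i
        · simp [prodVec, h0 k]
        · simp [prodVec, h1 k]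
      rw [this]; exact v.2
    · intro hcon
      obtain ⟨k, hk⟩ := Function.ne_iff.mp hy.2
      have := congrFun hcon (1, k)
      simp [prodVec] at this
      exact hk this
  · -- ker (π 1) ≠ ⊥ : get v with second row zero
    have hker : LinearMap.ker (π 1) ≠ ⊥ := by
      exact fun h => hinj (LinearMap.ker_eq_bot.mp h)
    obtain ⟨v, hvker, hv0⟩ := Submodule.exists_mem_ne_zero_of_ne_bot hker
    have hrow1 : ∀ k, (v : Fin 2 × Fin n → ℂ) (1, k) = 0 := by
      intro k
      rw [← hπ 1 v k]
      rw [LinearMap.mem_ker] at hvker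
      rw [hvker]; rfl
    refine ⟨![1, 0], fun k => (v : Fin 2 × Fin n → ℂ) (0, k), ?_, ?_⟩
    · have : prodVec ![1, 0] (fun k => (v : Fin 2 × Fin n → ℂ) (0, k))
          = (v : Fin 2 × Fin n → ℂ) := by
        funext p
        obtain ⟨i, k⟩ := p
        fin_cases i
        · simp [prodVec]
        · simp [prodVec, hrow1 k]
      rw [this]; exact v.2
    · intro hcon
      apply hv0
      have hall : ∀ k, (v : Fin 2 × Fin n → ℂ) (0, k) = 0 := by
        intro k
        have := congrFun hcon (0, k)
        simpa [prodVec] using this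
      ext p
      obtain ⟨i, k⟩ := p
      fin_cases i
      · exact hall k
      · exact hrow1 k
end
end

section
/- Let n ≥ 1 and let ρ be a positive semidefinite complex matrix indexed by Fin 2 × Fin n. Let V be the span of the eigenvectors of the Hermitian matrix ρ^{T_A} corresponding to its strictly negative eigenvalues. Then V contains no nonzero product vector e ⊗ f (with (e ⊗ f)(i,k) = e(i)·f(k)). -/
open Matrix
open scoped ComplexOrder

noncomputable section

/-! The Hermitian form of `ptA ρ` at `e ⊗ f` equals that of `ρ` at `ē ⊗ f`, so it is nonnegative
when `ρ` is positive semidefinite. On the other hand, eigenvectors of a Hermitian matrix for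
distinct eigenvalues are orthogonal, so its Hermitian form is negative definite on the span of its
eigenvectors with negative eigenvalues. -/

open Module.End Submodule

namespace Matrix

variable {ι κ 𝕜 : Type*} [Fintype ι] [RCLike 𝕜] {A : Matrix ι ι 𝕜}

theorem IsHermitian.star_dotProduct_eq_zero_of_eigenvalue_ne (hA : A.IsHermitian)
    {u v : ι → 𝕜} {μ ν : ℝ} (hu : A *ᵥ u = (μ : 𝕜) • u) (hv : A *ᵥ v = (ν : 𝕜) • v)
    (hμν : μ ≠ ν) : star u ⬝ᵥ v = 0 := by
  have hu' : star u ᵥ* A = (μ : 𝕜) • star u := by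
    rw [← hA.eq, ← star_mulVec, hu, star_smul, RCLike.star_def, RCLike.conj_ofReal]
  have : (μ : 𝕜) * (star u ⬝ᵥ v) = ν * (star u ⬝ᵥ v) := by
    rw [← smul_eq_mul, ← smul_dotProduct, ← hu', ← dotProduct_mulVec, hv, dotProduct_smul,
      smul_eq_mul]
  exact (mul_eq_mul_right_iff.1 this).resolve_left (by exact_mod_cast hμν)

theorem IsHermitian.star_dotProduct_mulVec_finsupp_sum (hA : A.IsHermitian) {eig : κ → ℝ}
    (heig : Function.Injective eig) (c : κ →₀ (ι → 𝕜))
    (hc : ∀ k, A *ᵥ c k = (eig k : 𝕜) • c k) :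
    star (c.sum fun _ v => v) ⬝ᵥ (A *ᵥ c.sum fun _ v => v)
      = c.sum fun k v => (eig k : 𝕜) * (star v ⬝ᵥ v) := by
  classical
  simp only [Finsupp.sum, star_sum, mulVec_sum, hc, sum_dotProduct, dotProduct_sum,
    dotProduct_smul, smul_eq_mul]
  refine Finset.sum_congr rfl fun k hk =>
    congrArg _ (Finset.sum_eq_single k (fun j _ hjk => ?_) (absurd hk))
  exact hA.star_dotProduct_eq_zero_of_eigenvalue_ne (hc j) (hc k) (heig.ne hjk)

theorem IsHermitian.star_dotProduct_mulVec_neg_of_mem_span (hA : A.IsHermitian) {v : ι → 𝕜}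
    (hv : v ∈ span 𝕜 {w | ∃ μ : ℝ, μ < 0 ∧ A *ᵥ w = (μ : 𝕜) • w}) (hv0 : v ≠ 0) :
    star v ⬝ᵥ (A *ᵥ v) < 0 := by
  have hle : span 𝕜 {w | ∃ μ : ℝ, μ < 0 ∧ A *ᵥ w = (μ : 𝕜) • w}
      ≤ ⨆ μ : {μ : ℝ // μ < 0}, eigenspace (mulVecLin A) (μ : 𝕜) :=
    span_le.2 fun w ⟨μ, hμ, hw⟩ => mem_iSup_of_mem ⟨μ, hμ⟩ (mem_eigenspace_iff.2 hw)
  obtain ⟨c, hc, rfl⟩ := (mem_iSup_iff_exists_finsupp _ v).1 (hle hv)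
  rw [hA.star_dotProduct_mulVec_finsupp_sum Subtype.val_injective c
    fun μ => mem_eigenspace_iff.1 (hc μ)]
  have hsupp : c.support.Nonempty := Finsupp.support_nonempty_iff.2 (by rintro rfl; simp at hv0)
  refine Finset.sum_neg (fun μ hμ => mul_neg_of_neg_of_pos ?_ ?_) hsupp
  · exact_mod_cast μ.2
  · exact dotProduct_star_self_pos_iff.2 (Finsupp.mem_support_iff.1 hμ)

end Matrix

lemma ptA_isHermitian {n : ℕ} {ρ : Matrix (Fin 2 × Fin n) (Fin 2 × Fin n) ℂ}
    (hρ : ρ.IsHermitian) : (ptA ρ).IsHermitian := by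
  ext p q
  simpa [conjTranspose_apply, ptA] using congrFun₂ hρ (q.1, p.2) (p.1, q.2)

lemma star_prodVec_dotProduct_ptA_mulVec {n : ℕ} (ρ : Matrix (Fin 2 × Fin n) (Fin 2 × Fin n) ℂ)
    (e : Fin 2 → ℂ) (f : Fin n → ℂ) :
    star (prodVec e f) ⬝ᵥ (ptA ρ *ᵥ prodVec e f)
      = star (prodVec (star e) f) ⬝ᵥ (ρ *ᵥ prodVec (star e) f) := by
  simp only [dotProduct, mulVec, Fintype.sum_prod_type, Finset.mul_sum, ptA, prodVec,
    Pi.star_apply, star_mul', star_star]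
  -- swap the two summation indices running over `Fin 2`
  conv_lhs => rw [Finset.sum_comm]
  conv_rhs => rw [Finset.sum_comm]
  refine Finset.sum_congr rfl fun k _ => ?_
  rw [Finset.sum_comm]
  exact Finset.sum_congr rfl fun j _ => Finset.sum_congr rfl fun i _ =>
    Finset.sum_congr rfl fun l _ => by ring

theorem negSpan_no_prodVec_general {n : ℕ}
    (ρ : Matrix (Fin 2 × Fin n) (Fin 2 × Fin n) ℂ) (hρ : ρ.PosSemidef)
    (V : Submodule ℂ (Fin 2 × Fin n → ℂ))
    (hV : V = Submodule.span ℂ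
      {v : Fin 2 × Fin n → ℂ | v ≠ 0 ∧ ∃ μ : ℝ, μ < 0 ∧ ptA ρ *ᵥ v = (μ : ℂ) • v})
    (e : Fin 2 → ℂ) (f : Fin n → ℂ) (hmem : prodVec e f ∈ V) :
    prodVec e f = 0 := by
  subst hV
  by_contra hz
  have hneg := (ptA_isHermitian hρ.1).star_dotProduct_mulVec_neg_of_mem_span
    (span_mono (fun w hw => hw.2) hmem) hz
  rw [star_prodVec_dotProduct_ptA_mulVec] at hneg
  exact (hρ.dotProduct_mulVec_nonneg _).not_gt hneg

/-- The span of the eigenvectors of `ρ^{T_A}` corresponding to strictly negative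
eigenvalues contains no nonzero product vector. -/
theorem negSpan_no_prodVec {n : ℕ} (hn : 1 ≤ n)
    (ρ : Matrix (Fin 2 × Fin n) (Fin 2 × Fin n) ℂ) (hρ : ρ.PosSemidef)
    (V : Submodule ℂ (Fin 2 × Fin n → ℂ))
    (hV : V = Submodule.span ℂ
      {v : Fin 2 × Fin n → ℂ | v ≠ 0 ∧ ∃ μ : ℝ, μ < 0 ∧ ptA ρ *ᵥ v = (μ : ℂ) • v})
    (e : Fin 2 → ℂ) (f : Fin n → ℂ) (hmem : prodVec e f ∈ V) :
    prodVec e f = 0 :=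
  negSpan_no_prodVec_general ρ hρ V hV e f hmem
end
end

section
/- Let n ≥ 1 and let ρ = |ψ⟩⟨ψ| be a pure 2⊗n state, i.e., ρ is the rank-one matrix ρ_{(i,k),(j,l)} = ψ(i,k)·conj(ψ(j,l)) for a unit vector ψ ∈ ℂ^{2n}. Then the partial transpose ρ^{T_A} has at most one negative eigenvalue, counted with multiplicity. -/
/-!
If two eigenvalues of `ρ^{T_A}` were negative, the quadratic form `x ↦ ⟨x, ρ^{T_A} x⟩` would be
negative definite on the plane spanned by their eigenvectors. Write `x` and `ψ` as `2 × n`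
matrices with rows `x₀, x₁` and `ψ₀, ψ₁`, and let `G i j = ⟨x_i, ψ_j⟩`. Then the form equals
`∑ i j, G i j * conj (G j i)`, which is `|G 0 0|² + |G 1 1|² ≥ 0` on the hyperplane `G 1 0 = 0`.
Since a plane meets every hyperplane nontrivially, this is a contradiction.
-/

open Matrix

noncomputable section

open Finset ComplexConjugate

namespace Matrix.IsHermitian

variable {𝕜 ι : Type*} [RCLike 𝕜] [Fintype ι] [DecidableEq ι] {A : Matrix ι ι 𝕜}
  (hA : A.IsHermitian)

lemma star_eigenvectorBasis_dotProduct (i j : ι) :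
    star ⇑(hA.eigenvectorBasis i) ⬝ᵥ ⇑(hA.eigenvectorBasis j) = if i = j then 1 else 0 := by
  rw [dotProduct_comm, ← EuclideanSpace.inner_eq_star_dotProduct]
  exact orthonormal_iff_ite.mp hA.eigenvectorBasis.orthonormal i j

lemma re_star_dotProduct_mulVec_eigenvectorBasis {i j : ι} (hij : i ≠ j) (a b : 𝕜) :
    RCLike.re (star (a • ⇑(hA.eigenvectorBasis i) + b • ⇑(hA.eigenvectorBasis j)) ⬝ᵥ
        (A *ᵥ (a • ⇑(hA.eigenvectorBasis i) + b • ⇑(hA.eigenvectorBasis j)))) =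
      ‖a‖ ^ 2 * hA.eigenvalues i + ‖b‖ ^ 2 * hA.eigenvalues j := by
  simp only [mulVec_add, mulVec_smul, mulVec_eigenvectorBasis, star_add, star_smul,
    add_dotProduct, dotProduct_add, smul_dotProduct, dotProduct_smul,
    star_eigenvectorBasis_dotProduct, hij, hij.symm, if_true, if_false]
  simp only [RCLike.star_def, smul_eq_mul, RCLike.real_smul_eq_coe_smul (K := 𝕜), mul_one,
    mul_zero, add_zero, zero_add, ← mul_assoc]
  rw [mul_right_comm a, mul_right_comm b, RCLike.mul_conj, RCLike.mul_conj]
  norm_cast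

lemma card_eigenvalues_neg_le_one_of_nonneg_on_hyperplane (u : ι → 𝕜)
    (hu : ∀ x, u ⬝ᵥ x = 0 → 0 ≤ RCLike.re (star x ⬝ᵥ (A *ᵥ x))) :
    #{i | hA.eigenvalues i < 0} ≤ 1 := by
  by_contra! h
  obtain ⟨i, hi, j, hj, hij⟩ := one_lt_card.mp h
  simp only [mem_filter, mem_univ, true_and] at hi hj
  set v := ⇑(hA.eigenvectorBasis i)
  set w := ⇑(hA.eigenvectorBasis j)
  obtain ⟨a, b, hab, hker⟩ : ∃ a b : 𝕜, (a ≠ 0 ∨ b ≠ 0) ∧ a * (u ⬝ᵥ v) + b * (u ⬝ᵥ w) = 0 := by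
    by_cases hv : u ⬝ᵥ v = 0
    · exact ⟨1, 0, by simp, by simp [hv]⟩
    · exact ⟨u ⬝ᵥ w, -(u ⬝ᵥ v), by simp [hv], by ring⟩
  have hneg : ‖a‖ ^ 2 * hA.eigenvalues i + ‖b‖ ^ 2 * hA.eigenvalues j < 0 := by
    rcases hab with ha | hb
    · have := mul_neg_of_pos_of_neg (by positivity : 0 < ‖a‖ ^ 2) hi
      nlinarith [sq_nonneg ‖b‖]
    · have := mul_neg_of_pos_of_neg (by positivity : 0 < ‖b‖ ^ 2) hj
      nlinarith [sq_nonneg ‖a‖]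
  have hnonneg := hu (a • v + b • w) (by simpa [dotProduct_add, dotProduct_smul] using hker)
  rw [hA.re_star_dotProduct_mulVec_eigenvectorBasis hij] at hnonneg
  linarith

end Matrix.IsHermitian

def rowOverlap {α β γ : Type*} [Fintype γ] (x : α × γ → ℂ) (ψ : β × γ → ℂ) :
    Matrix α β ℂ :=
  of fun i j => ∑ k, conj (x (i, k)) * ψ (j, k)

lemma star_dotProduct_ptA_mulVec_of_pure {n : ℕ} (ψ x : Fin 2 × Fin n → ℂ) :
    star x ⬝ᵥ (ptA (fun p q => ψ p * conj (ψ q)) *ᵥ x) =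
      ∑ i, ∑ j, rowOverlap x ψ i j * conj (rowOverlap x ψ j i) := by
  simp only [dotProduct, mulVec, ptA, rowOverlap, of_apply, Pi.star_apply, RCLike.star_def,
    Fintype.sum_prod_type, map_sum, map_mul, Complex.conj_conj, mul_sum, sum_mul]
  refine sum_congr rfl fun i _ => ?_
  rw [sum_comm]
  refine sum_congr rfl fun j _ => ?_
  rw [sum_comm]
  exact sum_congr rfl fun l _ => sum_congr rfl fun k _ => by ring

lemma re_star_dotProduct_ptA_mulVec_of_pure_nonneg {n : ℕ} (ψ x : Fin 2 × Fin n → ℂ)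
    (hx : rowOverlap x ψ 1 0 = 0) :
    0 ≤ (star x ⬝ᵥ (ptA (fun p q => ψ p * conj (ψ q)) *ᵥ x)).re := by
  rw [star_dotProduct_ptA_mulVec_of_pure]
  simp only [Fin.sum_univ_two, hx, map_zero, mul_zero, zero_mul, add_zero, zero_add,
    Complex.mul_conj, Complex.add_re, Complex.ofReal_re]
  exact add_nonneg (Complex.normSq_nonneg _) (Complex.normSq_nonneg _)

theorem pt_pure_state_neg_eigenvalues_le_one_general {n : ℕ}
    (ψ : Fin 2 × Fin n → ℂ)
    (ρ : Matrix (Fin 2 × Fin n) (Fin 2 × Fin n) ℂ)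
    (hρ : ρ = fun p q => ψ p * starRingEnd ℂ (ψ q))
    (hH : (ptA ρ).IsHermitian) :
    (Finset.univ.filter fun i => hH.eigenvalues i < 0).card ≤ 1 := by
  subst hρ
  let u : Fin 2 × Fin n → ℂ := fun p => if p.1 = 1 then conj (ψ (0, p.2)) else 0
  have hu (x : Fin 2 × Fin n → ℂ) : u ⬝ᵥ x = conj (rowOverlap x ψ 1 0) := by
    simp [u, dotProduct, rowOverlap, Fintype.sum_prod_type, mul_comm]
  refine hH.card_eigenvalues_neg_le_one_of_nonneg_on_hyperplane u fun x hx => ?_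
  exact re_star_dotProduct_ptA_mulVec_of_pure_nonneg ψ x (by simpa [hu] using hx)

/-- Partial transposition of any pure `2 ⊗ n` state `|ψ⟩⟨ψ|` has at most one
negative eigenvalue (counted with multiplicity). -/
theorem pt_pure_state_neg_eigenvalues_le_one {n : ℕ} (hn : 1 ≤ n)
    (ψ : Fin 2 × Fin n → ℂ) (hψ : ∑ p, Complex.normSq (ψ p) = 1)
    (ρ : Matrix (Fin 2 × Fin n) (Fin 2 × Fin n) ℂ)
    (hρ : ρ = fun p q => ψ p * starRingEnd ℂ (ψ q))
    (hH : (ptA ρ).IsHermitian) :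
    (Finset.univ.filter fun i => hH.eigenvalues i < 0).card ≤ 1 :=
  pt_pure_state_neg_eigenvalues_le_one_general ψ ρ hρ hH
end
end

section
/- There exists a 2⊗3 density matrix ρ (a positive semidefinite complex matrix indexed by Fin 2 × Fin 3 with trace 1) whose normalized geometric discord is strictly smaller than its squared negativity: D(ρ) < N(ρ)². -/
open Matrix
open scoped Kronecker ComplexOrder

noncomputable section

/-- The squared Frobenius (Hilbert-Schmidt) norm `‖X‖_F² = trace (Xᴴ X)`. -/
def frobSq {m : Type*} [Fintype m] (X : Matrix m m ℂ) : ℝ :=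
  (Xᴴ * X).trace.re

/-- The post-measurement state after a von Neumann measurement `{P, I - P}` on the
qubit subsystem `A`. -/
def measured {n : ℕ} (P : Matrix (Fin 2) (Fin 2) ℂ)
    (ρ : Matrix (Fin 2 × Fin n) (Fin 2 × Fin n) ℂ) :
    Matrix (Fin 2 × Fin n) (Fin 2 × Fin n) ℂ :=
  (P ⊗ₖ (1 : Matrix (Fin n) (Fin n) ℂ)) * ρ * (P ⊗ₖ (1 : Matrix (Fin n) (Fin n) ℂ)) +
    ((1 - P) ⊗ₖ (1 : Matrix (Fin n) (Fin n) ℂ)) * ρ *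
      ((1 - P) ⊗ₖ (1 : Matrix (Fin n) (Fin n) ℂ))

/-- The (normalized) geometric discord of a `2 ⊗ n` state. -/
def geomDiscord {n : ℕ} (ρ : Matrix (Fin 2 × Fin n) (Fin 2 × Fin n) ℂ) : ℝ :=
  2 * sInf {r : ℝ | ∃ P : Matrix (Fin 2) (Fin 2) ℂ,
    P * P = P ∧ Pᴴ = P ∧ P.trace = 1 ∧ r = frobSq (ρ - measured P ρ)}

/-- The negativity of a `2 ⊗ n` state, given a proof that `ρ^{T_A}` is Hermitian. -/
def negativity {n : ℕ} (ρ : Matrix (Fin 2 × Fin n) (Fin 2 × Fin n) ℂ)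
    (hH : (ptA ρ).IsHermitian) : ℝ :=
  (∑ i, |hH.eigenvalues i|) - 1

/-!
The witness is `ρ = |ψ₀⟩⟨ψ₀| + |ψ₁⟩⟨ψ₁|` with `ψ₀ = (3/10)(|00⟩ + |11⟩)` and
`ψ₁ = (1/10)|01⟩ + (9/10)|12⟩`.

Measuring the qubit in the computational basis only erases the two off-diagonal blocks of `ρ`,
whose four nonzero entries equal `9/100`; hence `D(ρ) ≤ 2 · 4 · (9/100)² = 81/1250`.

For the negativity, `Re tr (X W) ≤ ‖X‖₁` for every Hermitian `X` and every `W` with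
`-1 ≤ W ≤ 1`, as one sees by diagonalising `X`. Taking `W = 1 - 2Q` with `Q` an orthogonal
projection gives `N(ρ) ≥ -2 Re tr (ρ^{T_A} Q)`. Projecting onto rational approximations of the
two eigenvectors of `ρ^{T_A}` with negative eigenvalue gives `N(ρ) ≥ 171/625`, and
`(171/625)² > 81/1250`.
-/

namespace Matrix

variable {n : ℕ}

theorem IsHermitian.ptA {ρ : Matrix (Fin 2 × Fin n) (Fin 2 × Fin n) ℂ} (hρ : ρ.IsHermitian) :
    (ptA ρ).IsHermitian := by
  ext p q
  simpa [_root_.ptA] using congrFun₂ hρ (q.1, p.2) (p.1, q.2)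

theorem trace_ptA (ρ : Matrix (Fin 2 × Fin n) (Fin 2 × Fin n) ℂ) : (ptA ρ).trace = ρ.trace :=
  rfl

section RCLike

variable {m 𝕜 : Type*} [RCLike 𝕜]

theorem posSemidef_of_conjTranspose_eq_of_mul_self_eq [Fintype m] {Q : Matrix m m 𝕜}
    (hQH : Qᴴ = Q) (hQ : Q * Q = Q) : Q.PosSemidef := by
  simpa only [hQH, hQ] using posSemidef_conjTranspose_mul_self Q

theorem conjTranspose_vecMulVec_add_vecMulVec (v w : m → 𝕜) :
    (vecMulVec v (star v) + vecMulVec w (star w))ᴴ =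
      vecMulVec v (star v) + vecMulVec w (star w) := by
  simp [conjTranspose_vecMulVec]

theorem vecMulVec_add_vecMulVec_mul_self [Fintype m] {v w : m → 𝕜} (hv : star v ⬝ᵥ v = 1)
    (hw : star w ⬝ᵥ w = 1) (hvw : star v ⬝ᵥ w = 0) :
    (vecMulVec v (star v) + vecMulVec w (star w)) *
        (vecMulVec v (star v) + vecMulVec w (star w)) =
      vecMulVec v (star v) + vecMulVec w (star w) := by
  have hwv : star w ⬝ᵥ v = 0 := by rw [star_dotProduct, hvw, star_zero]
  simp only [add_mul, mul_add, vecMulVec_mul_vecMulVec, hv, hw, hvw, hwv, one_smul, zero_smul,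
    vecMulVec_zero, add_zero, zero_add]

end RCLike

theorem IsHermitian.re_trace_mul_le_sum_abs_eigenvalues {m : Type*} [Fintype m]
    [DecidableEq m] {X W : Matrix m m ℂ} (hX : X.IsHermitian) (h₁ : (1 - W).PosSemidef)
    (h₂ : (1 + W).PosSemidef) : (X * W).trace.re ≤ ∑ i, |hX.eigenvalues i| := by
  set U : Matrix m m ℂ := (hX.eigenvectorUnitary : Matrix m m ℂ)
  have hU : star U * U = 1 := Unitary.coe_star_mul_self _
  set G := star U * W * U
  have hG : ∀ i, |(G i i).re| ≤ 1 := by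
    intro i
    have hp := (h₂.conjTranspose_mul_mul_same U).diag_nonneg (i := i)
    have hm := (h₁.conjTranspose_mul_mul_same U).diag_nonneg (i := i)
    rw [← star_eq_conjTranspose, mul_add, add_mul, mul_one, hU] at hp
    rw [← star_eq_conjTranspose, mul_sub, sub_mul, mul_one, hU] at hm
    simp only [add_apply, sub_apply, one_apply_eq, Complex.le_def, Complex.add_re,
      Complex.sub_re, Complex.one_re, Complex.zero_re] at hp hm
    exact abs_le.mpr ⟨by linarith [hp.1], by linarith [hm.1]⟩
  have htr : (X * W).trace = ∑ i, (hX.eigenvalues i : ℂ) * G i i := by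
    conv_lhs => rw [hX.spectral_theorem, Unitary.conjStarAlgAut_apply]
    rw [mul_assoc, mul_assoc, trace_mul_comm, mul_assoc]
    simp only [trace, diag_apply, diagonal_mul, Function.comp_apply, Complex.coe_algebraMap]
    rfl
  rw [htr, Complex.re_sum]
  refine Finset.sum_le_sum fun i _ => ?_
  calc ((hX.eigenvalues i : ℂ) * G i i).re = hX.eigenvalues i * (G i i).re :=
        Complex.re_ofReal_mul _ _
    _ ≤ |hX.eigenvalues i| * |(G i i).re| := by rw [← abs_mul]; exact le_abs_self _
    _ ≤ |hX.eigenvalues i| := mul_le_of_le_one_right (abs_nonneg _) (hG i)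

end Matrix

theorem frobSq_eq_sum_normSq {m : Type*} [Fintype m] (X : Matrix m m ℂ) :
    frobSq X = ∑ i, ∑ j, Complex.normSq (X j i) := by
  simp [frobSq, trace, mul_apply, Complex.re_sum, Complex.normSq_apply]

theorem frobSq_nonneg {m : Type*} [Fintype m] (X : Matrix m m ℂ) : 0 ≤ frobSq X := by
  rw [frobSq_eq_sum_normSq]
  exact Finset.sum_nonneg fun i _ => Finset.sum_nonneg fun j _ => Complex.normSq_nonneg _

theorem measured_diagonal_apply {n : ℕ} (ρ : Matrix (Fin 2 × Fin n) (Fin 2 × Fin n) ℂ)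
    (p q : Fin 2 × Fin n) :
    measured (diagonal ![1, 0]) ρ p q = if p.1 = q.1 then ρ p q else 0 := by
  have hc : (1 : Matrix (Fin 2) (Fin 2) ℂ) - diagonal ![1, 0] = diagonal ![0, 1] := by
    rw [← diagonal_one, diagonal_sub]
    congr 1; ext i; fin_cases i <;> simp
  rw [measured, hc, ← diagonal_one, diagonal_kronecker_diagonal, diagonal_kronecker_diagonal]
  simp only [Matrix.add_apply, diagonal_mul, mul_diagonal]
  rcases p with ⟨a, i⟩; rcases q with ⟨b, j⟩
  fin_cases a <;> fin_cases b <;> simp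

theorem geomDiscord_le {n : ℕ} (ρ : Matrix (Fin 2 × Fin n) (Fin 2 × Fin n) ℂ)
    {P : Matrix (Fin 2) (Fin 2) ℂ} (hP : P * P = P) (hPH : Pᴴ = P) (hP1 : P.trace = 1) :
    geomDiscord ρ ≤ 2 * frobSq (ρ - measured P ρ) := by
  refine mul_le_mul_of_nonneg_left (csInf_le ⟨0, ?_⟩ ⟨P, hP, hPH, hP1, rfl⟩) zero_le_two
  rintro _ ⟨Q, -, -, -, rfl⟩
  exact frobSq_nonneg _

theorem neg_two_mul_re_trace_ptA_mul_le_negativity {n : ℕ}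
    {ρ : Matrix (Fin 2 × Fin n) (Fin 2 × Fin n) ℂ} (hρ : ρ.trace = 1)
    (hH : (ptA ρ).IsHermitian) {Q : Matrix (Fin 2 × Fin n) (Fin 2 × Fin n) ℂ}
    (hQH : Qᴴ = Q) (hQ : Q * Q = Q) : -2 * (ptA ρ * Q).trace.re ≤ negativity ρ hH := by
  have hQ' : (1 - Q) * (1 - Q) = 1 - Q := by rw [sub_mul, mul_sub, mul_sub, hQ]; simp
  have hQH' : (1 - Q)ᴴ = 1 - Q := by rw [conjTranspose_sub, conjTranspose_one, hQH]
  have hpos := posSemidef_of_conjTranspose_eq_of_mul_self_eq hQH hQ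
  have hpos' := posSemidef_of_conjTranspose_eq_of_mul_self_eq hQH' hQ'
  have key := hH.re_trace_mul_le_sum_abs_eigenvalues (W := 1 - (Q + Q))
    (by rw [sub_sub_cancel]; exact hpos.add hpos)
    (by rw [show 1 + (1 - (Q + Q)) = (1 - Q) + (1 - Q) by abel]; exact hpos'.add hpos')
  rw [mul_sub, mul_one, mul_add, trace_sub, trace_add, trace_ptA, hρ] at key
  simp only [Complex.sub_re, Complex.add_re, Complex.one_re] at key
  rw [negativity]
  linarith

namespace TwoThreeExample

def ψ₀ : Fin 2 × Fin 3 → ℂ := fun p => ![![3/10, 0, 0], ![0, 3/10, 0]] p.1 p.2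

def ψ₁ : Fin 2 × Fin 3 → ℂ := fun p => ![![0, 1/10, 0], ![0, 0, 9/10]] p.1 p.2

def ρ : Matrix (Fin 2 × Fin 3) (Fin 2 × Fin 3) ℂ :=
  vecMulVec ψ₀ (star ψ₀) + vecMulVec ψ₁ (star ψ₁)

/- `ρ^{T_A}` has negative eigenvalues on the planes spanned by `|01⟩, |10⟩` and by `|02⟩, |11⟩`,
with eigenvectors close to `v` and `w`. -/
def v : Fin 2 × Fin 3 → ℂ := fun p => ![![0, 3/5, 0], ![-4/5, 0, 0]] p.1 p.2

def w : Fin 2 × Fin 3 → ℂ := fun p => ![![0, 0, 4/5], ![0, -3/5, 0]] p.1 p.2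

def Q : Matrix (Fin 2 × Fin 3) (Fin 2 × Fin 3) ℂ :=
  vecMulVec v (star v) + vecMulVec w (star w)

theorem posSemidef_ρ : ρ.PosSemidef :=
  (posSemidef_vecMulVec_self_star ψ₀).add (posSemidef_vecMulVec_self_star ψ₁)

theorem trace_ρ : ρ.trace = 1 := by
  norm_num [ρ, ψ₀, ψ₁, vecMulVec_apply, Pi.star_apply, map_div₀, Complex.conj_ofNat, trace,
    Fintype.sum_prod_type, Fin.sum_univ_succ]

theorem frobSq_sub_measured : frobSq (ρ - measured (diagonal ![1, 0]) ρ) = 81 / 2500 := by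
  norm_num [frobSq_eq_sum_normSq, measured_diagonal_apply, ρ, ψ₀, ψ₁, vecMulVec_apply,
    Pi.star_apply, map_div₀, Complex.conj_ofNat, Fintype.sum_prod_type, Fin.sum_univ_succ]

theorem Q_mul_self : Q * Q = Q := by
  apply vecMulVec_add_vecMulVec_mul_self <;>
    norm_num [v, w, Pi.star_apply, map_div₀, map_neg, Complex.conj_ofNat, dotProduct,
      Fintype.sum_prod_type, Fin.sum_univ_succ]

theorem re_trace_ptA_mul_Q : (ptA ρ * Q).trace.re = -171 / 1250 := by
  norm_num [ptA, ρ, Q, ψ₀, ψ₁, v, w, vecMulVec_apply, Pi.star_apply, map_div₀, map_neg,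
    Complex.conj_ofNat, trace, mul_apply, Fintype.sum_prod_type, Fin.sum_univ_succ]

end TwoThreeExample

open TwoThreeExample in
/-- There exists a `2 ⊗ 3` density matrix whose geometric discord is strictly
smaller than its squared negativity. -/
theorem exists_two_three_discord_lt_sq_negativity :
    ∃ ρ : Matrix (Fin 2 × Fin 3) (Fin 2 × Fin 3) ℂ,
      ρ.PosSemidef ∧ ρ.trace = 1 ∧
        ∃ hH : (ptA ρ).IsHermitian,
          geomDiscord ρ < (negativity ρ hH) ^ 2 := by
  have hH : (ptA ρ).IsHermitian := posSemidef_ρ.isHermitian.ptA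
  refine ⟨ρ, posSemidef_ρ, trace_ρ, hH, ?_⟩
  have hD : geomDiscord ρ ≤ 81 / 1250 := by
    have h := geomDiscord_le ρ (P := diagonal ![1, 0])
      (by rw [diagonal_mul_diagonal]; congr 1; ext i; fin_cases i <;> simp)
      (by simp) (by simp [trace])
    rw [frobSq_sub_measured] at h
    linarith
  have hN : 171 / 625 ≤ negativity ρ hH := by
    have h := neg_two_mul_re_trace_ptA_mul_le_negativity trace_ρ hH (Q := Q)
      (conjTranspose_vecMulVec_add_vecMulVec v w) Q_mul_self
    rw [re_trace_ptA_mul_Q] at h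
    linarith
  calc geomDiscord ρ ≤ 81 / 1250 := hD
    _ < (171 / 625) ^ 2 := by norm_num
    _ ≤ negativity ρ hH ^ 2 := pow_le_pow_left₀ (by norm_num) hN 2
end
end
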